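/- Let d ≥ 1 and let f : ℝ^d → ℝ be three times continuously differentiable with |∂³_{ijk}f(x)| ≤ B₁ for all indices i, j, k and all x. Set c₂″ = B₁d⁴/3. Then for every x ∈ ℝ^d, every δ > 0, and every coordinate j ∈ {1,…,d}, the balanced (two-sided) estimator satisfies | E_u[ ((f(x + δu) − f(x − δu))/(2δ)) · (d+1)u_j/(1+‖u‖²) ] − c₂·∂_j f(x) | ≤ c₂″·δ², where u is distributed with the unit-scale truncated Cauchy density h and c₂ = E_u[(d+1)u₁²/(1+‖u‖²)]. -/

import Mathlib

open MeasureTheory Real Filter Topology ProbabilityTheory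

/-- The truncated (to the `δ`-sphere) Cauchy density on `ℝ^d`, with normalizing
constant `c₁`: `h_δ(u) = Γ((d+1)/2)/(π^((d+1)/2) c₁ δ^d) · (1+‖u‖²/δ²)^(-(d+1)/2)`
for `‖u‖ ≤ δ` and `0` otherwise. -/
noncomputable def truncCauchy (d : ℕ) (c₁ δ : ℝ) (u : EuclideanSpace ℝ (Fin d)) : ℝ :=
  if ‖u‖ ≤ δ then
    Real.Gamma (((d : ℝ) + 1) / 2) / (Real.pi ^ (((d : ℝ) + 1) / 2) * c₁ * δ ^ d) *
      (1 + ‖u‖ ^ 2 / δ ^ 2) ^ (-(((d : ℝ) + 1) / 2))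
  else 0

/-- The unit-scale truncated Cauchy probability measure on `ℝ^d`. -/
noncomputable def truncCauchyMeasure (d : ℕ) (c₁ : ℝ) : Measure (EuclideanSpace ℝ (Fin d)) :=
  volume.withDensity fun v => ENNReal.ofReal (truncCauchy d c₁ 1 v)

/-!
Restricted to the segment `t ↦ x + t • (δ • u)`, Taylor's theorem with Lagrange remainder on both
sides of `0` makes the even-order terms cancel, so the central difference quotient differs from
`fderiv ℝ f x u` by at most `B₁ (∑ i, |δ u i|)³ / (6δ) ≤ B₁ d³ δ² / 6` on the unit ball, where the
weight `(d + 1) u j / (1 + ‖u‖²)` is bounded by `d + 1`; this gives the error `c₂'' δ²`.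
For the main term, `fderiv ℝ f x u = ∑ i, ∂ᵢ f(x) u i`, and since the density is radial,
reflecting the coordinate `u i` kills the moments `E[u i u j w(‖u‖)]` for `i ≠ j`, while swapping
coordinates shows that all the diagonal moments equal `c₂`.
-/

open Nat in
theorem abs_sub_taylor_le {g : ℝ → ℝ} {n : ℕ} (hg : ContDiff ℝ (n + 1) g) {M : ℝ}
    (hM : ∀ t, |iteratedDeriv (n + 1) g t| ≤ M) :
    |g 1 - ∑ k ∈ Finset.range (n + 1), iteratedDeriv k g 0 / k !| ≤ M / (n + 1)! := by
  obtain ⟨t, -, ht⟩ := taylor_mean_remainder_lagrange_iteratedDeriv (x₀ := 0) (x := 1)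
    zero_ne_one hg.contDiffOn
  have hcoeff : ∀ k ∈ Finset.range (n + 1),
      ((k ! : ℝ)⁻¹ * (1 - 0) ^ k) • iteratedDerivWithin k g (Set.uIcc 0 1) 0 =
        iteratedDeriv k g 0 / k ! := by
    intro k hk
    rw [iteratedDerivWithin_eq_iteratedDeriv (uniqueDiffOn_uIcc zero_ne_one)
      ((hg.of_le (by exact_mod_cast (Finset.mem_range.1 hk).le)).contDiffAt)
      Set.left_mem_uIcc]
    simp [div_eq_inv_mul]
  rw [taylor_within_apply, Finset.sum_congr rfl hcoeff] at ht
  rw [ht, sub_zero, one_pow, mul_one, abs_div, Nat.abs_cast]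
  exact div_le_div_of_nonneg_right (hM t) (Nat.cast_nonneg _)

theorem abs_sub_sub_two_mul_deriv_le {g : ℝ → ℝ} (hg : ContDiff ℝ 3 g) {M : ℝ}
    (hM : ∀ t, |iteratedDeriv 3 g t| ≤ M) :
    |g 1 - g (-1) - 2 * deriv g 0| ≤ M / 3 := by
  have hrefl : ContDiff ℝ 3 (fun t => g (-t)) := hg.comp contDiff_neg
  have hM' : ∀ t, |iteratedDeriv 3 (fun t => g (-t)) t| ≤ M := fun t => by
    simpa [iteratedDeriv_comp_neg] using hM (-t)
  have hfwd := abs_sub_taylor_le (n := 2) hg hM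
  have hbwd := abs_sub_taylor_le (n := 2) hrefl hM'
  simp only [Finset.sum_range_succ, Finset.sum_range_zero, iteratedDeriv_comp_neg, neg_zero,
    iteratedDeriv_zero, iteratedDeriv_one] at hfwd hbwd
  norm_num at hfwd hbwd
  rw [abs_le] at *
  constructor <;> linarith [hfwd.1, hfwd.2, hbwd.1, hbwd.2]

theorem iteratedDeriv_comp_add_smul {E F : Type*} [NormedAddCommGroup E] [NormedSpace ℝ E]
    [NormedAddCommGroup F] [NormedSpace ℝ F] {f : E → F} {n : WithTop ℕ∞} (hf : ContDiff ℝ n f)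
    {k : ℕ} (hk : k ≤ n) (x v : E) (t : ℝ) :
    iteratedDeriv k (fun s : ℝ => f (x + s • v)) t =
      iteratedFDeriv ℝ k f (x + t • v) (fun _ => v) := by
  have hcomp : (fun s : ℝ => f (x + s • v)) =
      (fun z => f (x + z)) ∘ ContinuousLinearMap.toSpanSingleton ℝ v := rfl
  rw [iteratedDeriv_eq_iteratedFDeriv, hcomp,
    ContinuousLinearMap.iteratedFDeriv_comp_right _ (f := fun z => f (x + z))
      (hf.comp (contDiff_const.add contDiff_id)) _ hk,
    iteratedFDeriv_comp_add_left]
  simp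

theorem sum_abs_apply_le_card_mul_norm {ι : Type*} [Fintype ι] (v : EuclideanSpace ℝ ι) :
    ∑ i, |v i| ≤ Fintype.card ι * ‖v‖ := by
  simpa using Finset.sum_le_sum fun i (_ : i ∈ Finset.univ) => PiLp.norm_apply_le v i

section CentralDifference

variable {ι : Type*} [Fintype ι] [DecidableEq ι]

theorem abs_apply_diag_le_mul_sum_abs_pow {n : ℕ}
    (T : ContinuousMultilinearMap ℝ (fun _ : Fin n => EuclideanSpace ℝ ι) ℝ) {B : ℝ}
    (hT : ∀ r : Fin n → ι, |T (fun s => EuclideanSpace.single (r s) 1)| ≤ B)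
    (v : EuclideanSpace ℝ ι) :
    |T (fun _ => v)| ≤ B * (∑ i, |v i|) ^ n := by
  have hv : v = ∑ i, v i • EuclideanSpace.single i (1 : ℝ) := by
    simpa using ((EuclideanSpace.basisFun ι ℝ).sum_repr v).symm
  conv_lhs => rw [hv, T.map_sum]
  rw [Finset.sum_pow', Fintype.piFinset_univ, Finset.mul_sum]
  refine (Finset.abs_sum_le_sum_abs _ _).trans (Finset.sum_le_sum fun r _ => ?_)
  rw [T.map_smul_univ, smul_eq_mul, abs_mul, Finset.abs_prod, mul_comm]
  exact mul_le_mul_of_nonneg_right (hT r) (Finset.prod_nonneg fun _ _ => abs_nonneg _)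

theorem abs_sub_sub_two_mul_fderiv_le {f : EuclideanSpace ℝ ι → ℝ} (hf : ContDiff ℝ 3 f) {B : ℝ}
    (h3 : ∀ (y : EuclideanSpace ℝ ι) (i j k : ι),
      |iteratedFDeriv ℝ 3 f y
        ![EuclideanSpace.single i 1, EuclideanSpace.single j 1, EuclideanSpace.single k 1]| ≤ B)
    (x v : EuclideanSpace ℝ ι) :
    |f (x + v) - f (x - v) - 2 * fderiv ℝ f x v| ≤ B * (∑ i, |v i|) ^ 3 / 3 := by
  have hline : ContDiff ℝ 3 (fun s : ℝ => f (x + s • v)) :=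
    hf.comp (contDiff_const.add (contDiff_id.smul contDiff_const))
  have hM : ∀ t, |iteratedDeriv 3 (fun s : ℝ => f (x + s • v)) t| ≤ B * (∑ i, |v i|) ^ 3 := by
    intro t
    rw [iteratedDeriv_comp_add_smul hf le_rfl]
    refine abs_apply_diag_le_mul_sum_abs_pow _ (fun r => ?_) v
    convert h3 (x + t • v) (r 0) (r 1) (r 2) using 3
    ext s : 1
    fin_cases s <;> rfl
  have hderiv : deriv (fun s : ℝ => f (x + s • v)) 0 = fderiv ℝ f x v := by
    rw [← iteratedDeriv_one, iteratedDeriv_comp_add_smul hf (by norm_num)]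
    simp
  simpa [hderiv, ← sub_eq_add_neg] using abs_sub_sub_two_mul_deriv_le hline hM

theorem abs_central_difference_quotient_sub_fderiv_le {f : EuclideanSpace ℝ ι → ℝ}
    (hf : ContDiff ℝ 3 f) {B : ℝ} (hB : 0 ≤ B)
    (h3 : ∀ (y : EuclideanSpace ℝ ι) (i j k : ι),
      |iteratedFDeriv ℝ 3 f y
        ![EuclideanSpace.single i 1, EuclideanSpace.single j 1, EuclideanSpace.single k 1]| ≤ B)
    (x : EuclideanSpace ℝ ι) {δ : ℝ} (hδ : 0 < δ) {u : EuclideanSpace ℝ ι} (hu : ‖u‖ ≤ 1) :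
    |(f (x + δ • u) - f (x - δ • u)) / (2 * δ) - fderiv ℝ f x u|
      ≤ B * Fintype.card ι ^ 3 * δ ^ 2 / 6 := by
  have hsum : ∑ i, |(δ • u) i| ≤ Fintype.card ι * δ := by
    simp only [PiLp.smul_apply, smul_eq_mul, abs_mul, abs_of_pos hδ, ← Finset.mul_sum]
    calc δ * ∑ i, |u i| ≤ δ * (Fintype.card ι * ‖u‖) := by
          gcongr; exact sum_abs_apply_le_card_mul_norm u
      _ ≤ δ * (Fintype.card ι * 1) := by gcongr
      _ = Fintype.card ι * δ := by ring
  have h := abs_sub_sub_two_mul_fderiv_le hf h3 x (δ • u)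
  rw [map_smul, smul_eq_mul] at h
  rw [show (f (x + δ • u) - f (x - δ • u)) / (2 * δ) - fderiv ℝ f x u =
      (f (x + δ • u) - f (x - δ • u) - 2 * (δ * fderiv ℝ f x u)) / (2 * δ) by field_simp,
    abs_div, abs_of_pos (by positivity : (0 : ℝ) < 2 * δ), div_le_iff₀ (by positivity)]
  calc _ ≤ B * (∑ i, |(δ • u) i|) ^ 3 / 3 := h
    _ ≤ B * (Fintype.card ι * δ) ^ 3 / 3 := by gcongr
    _ = _ := by ring

end CentralDifference

theorem integral_comp_linearIsometryEquiv {E : Type*} [NormedAddCommGroup E]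
    [InnerProductSpace ℝ E] [FiniteDimensional ℝ E] [MeasurableSpace E] [BorelSpace E]
    (e : E ≃ₗᵢ[ℝ] E) (g : E → ℝ) : ∫ u, g (e u) = ∫ u, g u :=
  e.measurePreserving.integral_comp e.toHomeomorph.measurableEmbedding g

section RadialMoments

variable {ι : Type*} [Fintype ι] [DecidableEq ι]

noncomputable def coordReflection (i : ι) : EuclideanSpace ℝ ι ≃ₗᵢ[ℝ] EuclideanSpace ℝ ι :=
  LinearIsometryEquiv.piLpCongrRight 2
    fun k => if k = i then LinearIsometryEquiv.neg ℝ else LinearIsometryEquiv.refl ℝ ℝ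

theorem coordReflection_apply (i : ι) (u : EuclideanSpace ℝ ι) (k : ι) :
    coordReflection i u k = if k = i then -u k else u k := by
  simp only [coordReflection, LinearIsometryEquiv.piLpCongrRight_apply, PiLp.toLp_apply]
  split_ifs <;> simp

variable {ρ : EuclideanSpace ℝ ι → ℝ} (hρ : ∀ u w, ‖u‖ = ‖w‖ → ρ u = ρ w)
include hρ

theorem integral_mul_apply_mul_apply_eq_zero {i j : ι} (hij : i ≠ j) :
    ∫ u, ρ u * (u i * u j) = 0 := by
  have hodd : ∀ u, ρ (coordReflection i u) * (coordReflection i u i * coordReflection i u j) =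
      -(ρ u * (u i * u j)) := fun u => by
    rw [hρ _ u (LinearIsometryEquiv.norm_map _ u), coordReflection_apply, coordReflection_apply,
      if_pos rfl, if_neg hij.symm]
    ring
  have h := integral_comp_linearIsometryEquiv (coordReflection i) fun u => ρ u * (u i * u j)
  simp only [hodd, integral_neg] at h
  linarith

theorem integral_mul_apply_sq_eq (i k : ι) :
    ∫ u, ρ u * u i ^ 2 = ∫ u, ρ u * u k ^ 2 := by
  set e := LinearIsometryEquiv.piLpCongrLeft 2 ℝ ℝ (Equiv.swap i k)
  have hswap : ∀ u, ρ (e u) * e u k ^ 2 = ρ u * u i ^ 2 := fun u => by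
    rw [hρ _ u (LinearIsometryEquiv.norm_map _ u)]
    simp [e, LinearIsometryEquiv.piLpCongrLeft_apply, Equiv.piCongrLeft'_apply]
  rw [← integral_comp_linearIsometryEquiv e fun u => ρ u * u k ^ 2]
  exact integral_congr_ae (Eventually.of_forall fun u => (hswap u).symm)

theorem integral_mul_inner_mul_apply (j : ι)
    (hint : ∀ i, Integrable fun u => ρ u * (u i * u j)) (a : EuclideanSpace ℝ ι) :
    ∫ u, ρ u * (inner ℝ a u * u j) = a j * ∫ u, ρ u * u j ^ 2 := by
  have hexpand : ∀ u, ρ u * (inner ℝ a u * u j) = ∑ i, a i * (ρ u * (u i * u j)) := fun u => by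
    simp only [PiLp.inner_apply, RCLike.inner_apply, conj_trivial, Finset.sum_mul, Finset.mul_sum]
    exact Finset.sum_congr rfl fun i _ => by ring
  simp only [hexpand]
  rw [integral_finsetSum _ fun i _ => (hint i).const_mul _, Finset.sum_eq_single j]
  · rw [integral_const_mul]; simp only [sq]
  · intro i _ hij
    rw [integral_const_mul, integral_mul_apply_mul_apply_eq_zero hρ hij, mul_zero]
  · simp

end RadialMoments

section TruncCauchy

variable {d : ℕ} {c₁ δ : ℝ}

theorem truncCauchy_nonneg (hc₁ : 0 ≤ c₁) (u : EuclideanSpace ℝ (Fin d)) :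
    0 ≤ truncCauchy d c₁ δ u := by
  unfold truncCauchy
  split_ifs with hu
  · have hδ : 0 ≤ δ := (norm_nonneg u).trans hu
    have hΓ : 0 < Real.Gamma (((d : ℝ) + 1) / 2) := Real.Gamma_pos_of_pos (by positivity)
    have hπ : 0 < π ^ (((d : ℝ) + 1) / 2) := Real.rpow_pos_of_pos pi_pos _
    have hpow : 0 ≤ (1 + ‖u‖ ^ 2 / δ ^ 2) ^ (-(((d : ℝ) + 1) / 2)) :=
      Real.rpow_nonneg (by positivity) _
    positivity
  · exact le_rfl

theorem truncCauchy_eq_of_norm_eq {u w : EuclideanSpace ℝ (Fin d)} (h : ‖u‖ = ‖w‖) :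
    truncCauchy d c₁ δ u = truncCauchy d c₁ δ w := by
  simp only [truncCauchy, h]

theorem integrable_truncCauchy_mul {g : EuclideanSpace ℝ (Fin d) → ℝ} (hg : Continuous g) :
    Integrable fun u => truncCauchy d c₁ δ u * g u := by
  refine IntegrableOn.integrable_of_forall_notMem_eq_zero (s := Metric.closedBall 0 δ)
    (ContinuousOn.integrableOn_compact (isCompact_closedBall _ _) ?_) fun u hu => ?_
  · have hcont : Continuous fun u : EuclideanSpace ℝ (Fin d) =>
        Real.Gamma (((d : ℝ) + 1) / 2) / (π ^ (((d : ℝ) + 1) / 2) * c₁ * δ ^ d) *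
          (1 + ‖u‖ ^ 2 / δ ^ 2) ^ (-(((d : ℝ) + 1) / 2)) * g u :=
      (continuous_const.mul ((by fun_prop : Continuous fun u : EuclideanSpace ℝ (Fin d) =>
        1 + ‖u‖ ^ 2 / δ ^ 2).rpow_const fun u => Or.inl (by positivity))).mul hg
    refine hcont.continuousOn.congr fun u hu => ?_
    simp [truncCauchy, mem_closedBall_zero_iff.1 hu]
  · simp [truncCauchy, mem_closedBall_zero_iff.not.1 hu]

theorem abs_integral_truncCauchy_mul_le (hc₁ : 0 ≤ c₁)
    (hnorm : ∫ u : EuclideanSpace ℝ (Fin d), truncCauchy d c₁ δ u = 1)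
    {φ : EuclideanSpace ℝ (Fin d) → ℝ} {C : ℝ} (hφ : ∀ u, ‖u‖ ≤ δ → |φ u| ≤ C) :
    |∫ u, truncCauchy d c₁ δ u * φ u| ≤ C := by
  have hint : Integrable fun u => truncCauchy d c₁ δ u * C :=
    (Integrable.of_integral_ne_zero (by rw [hnorm]; exact one_ne_zero)).mul_const C
  have hle : ∀ u, ‖truncCauchy d c₁ δ u * φ u‖ ≤ truncCauchy d c₁ δ u * C := fun u => by
    rw [Real.norm_eq_abs, abs_mul, abs_of_nonneg (truncCauchy_nonneg hc₁ u)]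
    by_cases hu : ‖u‖ ≤ δ
    · exact mul_le_mul_of_nonneg_left (hφ u hu) (truncCauchy_nonneg hc₁ u)
    · simp [truncCauchy, hu]
  calc |∫ u, truncCauchy d c₁ δ u * φ u|
      ≤ ∫ u, truncCauchy d c₁ δ u * C := norm_integral_le_of_norm_le hint (.of_forall hle)
    _ = C := by rw [integral_mul_const, hnorm, one_mul]

/-- `(d + 1) u / (1 + ‖u‖²)` is `-∇ log` of the (untruncated) Cauchy density. -/
noncomputable def cauchyScore (d : ℕ) (j : Fin d) (u : EuclideanSpace ℝ (Fin d)) : ℝ :=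
  ((d : ℝ) + 1) * u j / (1 + ‖u‖ ^ 2)

theorem continuous_cauchyScore (j : Fin d) : Continuous (cauchyScore d j) := by
  unfold cauchyScore
  fun_prop (disch := intro u; positivity)

theorem abs_cauchyScore_le (j : Fin d) (u : EuclideanSpace ℝ (Fin d)) :
    |cauchyScore d j u| ≤ d + 1 := by
  have hcoord : |u j| ≤ 1 + ‖u‖ ^ 2 := by
    nlinarith [PiLp.norm_apply_le u j, Real.norm_eq_abs (u j), sq_nonneg (‖u‖ - 1)]
  rw [cauchyScore, abs_div, abs_mul, abs_of_pos (by positivity : (0 : ℝ) < d + 1),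
    abs_of_pos (by positivity : (0 : ℝ) < 1 + ‖u‖ ^ 2), div_le_iff₀ (by positivity)]
  gcongr

theorem integral_truncCauchy_mul_inner_mul_cauchyScore (a : EuclideanSpace ℝ (Fin d))
    (j k : Fin d) :
    ∫ u, truncCauchy d c₁ δ u * (inner ℝ a u * cauchyScore d j u) =
      a j * ∫ u, truncCauchy d c₁ δ u * (((d : ℝ) + 1) * u k ^ 2 / (1 + ‖u‖ ^ 2)) := by
  set ρ : EuclideanSpace ℝ (Fin d) → ℝ :=
    fun u => truncCauchy d c₁ δ u * (((d : ℝ) + 1) / (1 + ‖u‖ ^ 2)) with hρ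
  have hρ_radial : ∀ u w, ‖u‖ = ‖w‖ → ρ u = ρ w := fun u w h => by
    simp only [hρ, truncCauchy_eq_of_norm_eq h, h]
  have hint : ∀ i, Integrable fun u => ρ u * (u i * u j) := fun i => by
    simpa only [hρ, mul_assoc] using integrable_truncCauchy_mul (d := d) (c₁ := c₁) (δ := δ)
      (g := fun u => ((d : ℝ) + 1) / (1 + ‖u‖ ^ 2) * (u i * u j))
      (by fun_prop (disch := intro u; positivity))
  calc _ = ∫ u, ρ u * (inner ℝ a u * u j) := by
        congr 1; ext u; simp only [hρ, cauchyScore]; ring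
    _ = a j * ∫ u, ρ u * u k ^ 2 := by
        rw [integral_mul_inner_mul_apply hρ_radial j hint, integral_mul_apply_sq_eq hρ_radial]
    _ = _ := by
        congr 2; ext u; simp only [hρ]; ring

end TruncCauchy

theorem abs_central_difference_quotient_sub_fderiv_mul_cauchyScore_le {d : ℕ} (hd : 0 < d)
    {f : EuclideanSpace ℝ (Fin d) → ℝ} (hf : ContDiff ℝ 3 f) {B : ℝ} (hB : 0 ≤ B)
    (h3 : ∀ (y : EuclideanSpace ℝ (Fin d)) (i j k : Fin d),
      |iteratedFDeriv ℝ 3 f y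
        ![EuclideanSpace.single i 1, EuclideanSpace.single j 1, EuclideanSpace.single k 1]| ≤ B)
    (x : EuclideanSpace ℝ (Fin d)) {δ : ℝ} (hδ : 0 < δ) (j : Fin d)
    {u : EuclideanSpace ℝ (Fin d)} (hu : ‖u‖ ≤ 1) :
    |((f (x + δ • u) - f (x - δ • u)) / (2 * δ) - fderiv ℝ f x u) * cauchyScore d j u|
      ≤ B * d ^ 4 / 3 * δ ^ 2 := by
  have hd1 : (1 : ℝ) ≤ d := by exact_mod_cast hd
  rw [abs_mul]
  calc _ ≤ B * d ^ 3 * δ ^ 2 / 6 * (d + 1) := by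
        gcongr
        · simpa using abs_central_difference_quotient_sub_fderiv_le hf hB h3 x hδ hu
        · exact abs_cauchyScore_le j u
    _ ≤ B * d ^ 4 / 3 * δ ^ 2 := by
        nlinarith [mul_nonneg (mul_nonneg hB (sq_nonneg δ)) (pow_nonneg (Nat.cast_nonneg d) 3)]

/-- Coordinatewise bias bound for the balanced (two-sided) truncated-Cauchy estimator:
`|E_u[((f(x+δu) − f(x−δu))/(2δ))·(d+1)u_j/(1+‖u‖²)] − c₂·∂_j f(x)| ≤ c₂″δ²`
with `c₂″ = B₁d⁴/3`. -/
theorem balanced_estimator_bias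
    (d : ℕ) (hd : 0 < d) (c₁ : ℝ) (hc₁ : 0 < c₁)
    (hnorm : ∫ u : EuclideanSpace ℝ (Fin d), truncCauchy d c₁ 1 u = 1)
    (f : EuclideanSpace ℝ (Fin d) → ℝ) (B₁ : ℝ)
    (hf : ContDiff ℝ 3 f)
    (h3 : ∀ (y : EuclideanSpace ℝ (Fin d)) (i j k : Fin d),
      |iteratedFDeriv ℝ 3 f y
        ![EuclideanSpace.single i 1, EuclideanSpace.single j 1, EuclideanSpace.single k 1]| ≤ B₁)
    (c₂ c₂'' : ℝ)
    (hc₂ : c₂ = ∫ u : EuclideanSpace ℝ (Fin d),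
      truncCauchy d c₁ 1 u * (((d : ℝ) + 1) * (u ⟨0, hd⟩) ^ 2 / (1 + ‖u‖ ^ 2)))
    (hc₂'' : c₂'' = B₁ * (d : ℝ) ^ 4 / 3)
    (x : EuclideanSpace ℝ (Fin d)) (δ : ℝ) (hδ : 0 < δ) (j : Fin d) :
    |(∫ u : EuclideanSpace ℝ (Fin d),
        truncCauchy d c₁ 1 u *
          ((f (x + δ • u) - f (x - δ • u)) / (2 * δ) * (((d : ℝ) + 1) * u j / (1 + ‖u‖ ^ 2))))
      - c₂ * gradient f x j| ≤ c₂'' * δ ^ 2 := by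
  have hB : 0 ≤ B₁ := (abs_nonneg _).trans (h3 x ⟨0, hd⟩ ⟨0, hd⟩ ⟨0, hd⟩)
  have hfc := hf.continuous
  have hscore := continuous_cauchyScore (d := d) j
  have hlin : ∫ u, truncCauchy d c₁ 1 u * (fderiv ℝ f x u * cauchyScore d j u) =
      c₂ * gradient f x j := by
    simp_rw [← inner_gradient_left]
    rw [integral_truncCauchy_mul_inner_mul_cauchyScore _ j ⟨0, hd⟩, hc₂, mul_comm]
  simp_rw [← cauchyScore.eq_1 d j]
  rw [← hlin, ← integral_sub (integrable_truncCauchy_mul (by fun_prop))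
    (integrable_truncCauchy_mul (by fun_prop))]
  simp_rw [← mul_sub, ← sub_mul]
  exact abs_integral_truncCauchy_mul_le hc₁.le hnorm fun u hu => hc₂'' ▸
    abs_central_difference_quotient_sub_fderiv_mul_cauchyScore_le hd hf hB h3 x hδ j hu
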